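/- For ℏ > 0 and parameters E_s, E_x, E_y, E_b ∈ R with E_y ≠ 0, the function φ₀(u) = C·exp(πℏ(2i(E_s/E_y)u + (E_x/E_y)u² - i(E_b/(3E_y))u³)) solves the first-order ODE (−iE_y)φ' + (πℏ(E_b u² + 2iE_x u − 2E_s))φ = 0, and φ₀ is square-integrable on R if and only if E_x/E_y < 0. -/

import Mathlib

open Real MeasureTheory

/-!
φ₀ is `C · exp P` for a polynomial `P` with `E_y P' = πℏ(2iE_s + 2E_x u − iE_b u²)`, so the ODE is
the identity `φ₀' = P' φ₀`. Only the quadratic coefficient of `P` is real, hence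
`|φ₀(u)| = |C| exp(πℏ(E_x/E_y)u²)` is a Gaussian, square-integrable exactly when that
coefficient is negative.
-/

/-- The fiducial vector φ₀ for the case E_r = 0:
φ₀(u) = C exp(πℏ(2i(E_s/E_y)u + (E_x/E_y)u² − i(E_b/(3E_y))u³)). -/
noncomputable def phi0 (h Es Ex Ey Eb : ℝ) (C : ℂ) : ℝ → ℂ := fun u =>
  C * Complex.exp ((π : ℂ) * (h : ℂ) *
    (2 * Complex.I * ((Es : ℂ) / (Ey : ℂ)) * (u : ℂ)
      + ((Ex : ℂ) / (Ey : ℂ)) * (u : ℂ) ^ 2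
      - Complex.I * ((Eb : ℂ) / (3 * (Ey : ℂ))) * (u : ℂ) ^ 3))

theorem memLp_two_iff_of_norm_eq_mul_exp_sq {E : Type*} [NormedAddCommGroup E] {f : ℝ → E}
    (hf : AEStronglyMeasurable f volume) {c a : ℝ} (hc : c ≠ 0)
    (hnorm : ∀ x, ‖f x‖ = c * exp (a * x ^ 2)) :
    MemLp f 2 volume ↔ a < 0 := by
  have hsq : (fun x => ‖f x‖ ^ 2) = fun x => c ^ 2 * exp (-(-2 * a) * x ^ 2) := by
    funext x
    rw [hnorm, mul_pow, ← exp_nat_mul]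
    ring_nf
  rw [memLp_two_iff_integrable_sq_norm hf, hsq,
    integrable_const_mul_iff (pow_ne_zero 2 hc).isUnit, integrable_exp_neg_mul_sq_iff]
  constructor <;> intro <;> linarith

theorem hasDerivAt_phi0 (h Es Ex Ey Eb : ℝ) (C : ℂ) (u : ℝ) :
    HasDerivAt (phi0 h Es Ex Ey Eb C)
      (phi0 h Es Ex Ey Eb C u * ((π : ℂ) * (h : ℂ) *
        (2 * Complex.I * ((Es : ℂ) / (Ey : ℂ)) + ((Ex : ℂ) / (Ey : ℂ)) * (2 * (u : ℂ))
          - Complex.I * ((Eb : ℂ) / (3 * (Ey : ℂ))) * (3 * (u : ℂ) ^ 2)))) u := by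
  have hz : HasDerivAt (fun z : ℂ => z) 1 (u : ℂ) := hasDerivAt_id _
  have hexp := (((((hz.const_mul (2 * Complex.I * ((Es : ℂ) / (Ey : ℂ)))).add
    ((hasDerivAt_pow 2 (u : ℂ)).const_mul ((Ex : ℂ) / (Ey : ℂ)))).sub
    ((hasDerivAt_pow 3 (u : ℂ)).const_mul (Complex.I * ((Eb : ℂ) / (3 * (Ey : ℂ)))))).const_mul
    ((π : ℂ) * (h : ℂ))).cexp.const_mul C).comp_ofReal
  refine hexp.congr_deriv ?_
  simp only [phi0, Pi.add_apply, Pi.sub_apply]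
  push_cast
  ring

theorem norm_phi0 (h Es Ex Ey Eb : ℝ) (C : ℂ) (u : ℝ) :
    ‖phi0 h Es Ex Ey Eb C u‖ = ‖C‖ * exp (π * h * (Ex / Ey) * u ^ 2) := by
  rw [phi0, norm_mul, Complex.norm_exp]
  congr 2
  simp only [← Complex.ofReal_mul, ← Complex.ofReal_ofNat, ← Complex.ofReal_div,
    ← Complex.ofReal_pow, Complex.mul_re, Complex.mul_im, Complex.add_re, Complex.add_im,
    Complex.sub_re, Complex.sub_im, Complex.ofReal_re, Complex.ofReal_im, Complex.I_re,
    Complex.I_im, mul_zero, zero_mul, mul_one, one_mul, sub_self, add_zero, zero_add, sub_zero]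
  ring

/-- φ₀ solves the first-order ODE
(−iE_y)φ' + πℏ(E_b u² + 2iE_x u − 2E_s)φ = 0, and is square-integrable
if and only if E_x/E_y < 0. -/
theorem phi0_solves_and_square_integrable (h Es Ex Ey Eb : ℝ) (hh : 0 < h)
    (hEy : Ey ≠ 0) (C : ℂ) (hC : C ≠ 0) :
    (∀ u : ℝ, (-Complex.I * (Ey : ℂ)) * deriv (phi0 h Es Ex Ey Eb C) u
        + (π : ℂ) * (h : ℂ) * ((Eb : ℂ) * (u : ℂ) ^ 2 + 2 * Complex.I * (Ex : ℂ) * (u : ℂ)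
            - 2 * (Es : ℂ)) * phi0 h Es Ex Ey Eb C u = 0) ∧
    (MemLp (phi0 h Es Ex Ey Eb C) 2 volume ↔ Ex / Ey < 0) := by
  refine ⟨fun u => ?_, ?_⟩
  · have hEyC : (Ey : ℂ) ≠ 0 := by exact_mod_cast hEy
    rw [(hasDerivAt_phi0 h Es Ex Ey Eb C u).deriv]
    field_simp
    linear_combination π * h * (Eb * u ^ 2 - 2 * Es) * phi0 h Es Ex Ey Eb C u * Complex.I_sq
  · have hcont : Continuous (phi0 h Es Ex Ey Eb C) := by unfold phi0; fun_prop
    rw [memLp_two_iff_of_norm_eq_mul_exp_sq hcont.aestronglyMeasurable (norm_ne_zero_iff.2 hC)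
      (norm_phi0 h Es Ex Ey Eb C)]
    simp [mul_neg_iff, hh, pi_pos, hh.not_gt, pi_pos.not_gt]
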